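/- arXiv:math/0701059 — 2 statements merged into one kernel-verified Lean document; each statement's English description precedes it below -/
import Mathlib

section
/- Let N ≥ 1 and let μ and ν be finite positive Borel measures on the Euclidean unit sphere S_{N−1} ⊆ ℝ^N such that μ linearly majorizes ν. Then ∫_{S_{N−1}} p dμ ≥ ∫_{S_{N−1}} p dν for every sublinear functional p : ℝ^N → ℝ, i.e., for every p that is positively homogeneous (p(tx) = t·p(x) for t ≥ 0) and subadditive (p(x + y) ≤ p(x) + p(y)). -/
open MeasureTheory RealInnerProductSpace

/-- `μ` linearly majorizes `ν` (both finite positive Borel measures on the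
Euclidean unit sphere `S_{N-1} ⊆ ℝ^N`): for every finite Borel partition
`U 0, …, U (m-1)` of the sphere there are positive measures `μs k` summing to
`μ` such that `∫ ⟨l, u⟩ dμs k = ∫_{U k} ⟨l, u⟩ dν` for every `l ∈ ℝ^N`. -/
def LinMajorizes {N : ℕ}
    (μ ν : Measure (Metric.sphere (0 : EuclideanSpace ℝ (Fin N)) 1)) : Prop :=
  ∀ (m : ℕ) (U : Fin m → Set (Metric.sphere (0 : EuclideanSpace ℝ (Fin N)) 1)),
    (∀ k, MeasurableSet (U k)) →
    Pairwise (Function.onFun Disjoint U) →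
    (⋃ k, U k) = Set.univ →
    ∃ μs : Fin m → Measure (Metric.sphere (0 : EuclideanSpace ℝ (Fin N)) 1),
      (∀ k, IsFiniteMeasure (μs k)) ∧ (∑ k, μs k) = μ ∧
      ∀ (k : Fin m) (l : EuclideanSpace ℝ (Fin N)),
        ∫ u, ⟪l, (u : EuclideanSpace ℝ (Fin N))⟫ ∂(μs k) =
          ∫ u in U k, ⟪l, (u : EuclideanSpace ℝ (Fin N))⟫ ∂ν

/-!
A sublinear `p` is continuous, and at each point `c` of the sphere Hahn–Banach gives a vector `l`
with `⟪l, ·⟫ ≤ p` everywhere and equality at `c`, hence `p ≤ ⟪l, ·⟫ + ε` near `c`. By compactness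
the sphere splits into finitely many Borel pieces `U k` with such vectors `l k`. Splitting `μ`
along this partition as in the definition of linear majorization,
`∫_{U k} p dν ≤ ∫_{U k} ⟪l k, ·⟫ dν + ε ν(U k) = ∫ ⟪l k, ·⟫ dμ k + ε ν(U k) ≤ ∫ p dμ k + ε ν(U k)`,
and summing over `k` gives `∫ p dν ≤ ∫ p dμ + ε ν(S)` for every `ε > 0`.
-/

open Set Topology Function

structure IsSublinear {E : Type*} [AddCommGroup E] [Module ℝ E] (p : E → ℝ) : Prop where
  map_smul_of_nonneg : ∀ t : ℝ, 0 ≤ t → ∀ x, p (t • x) = t * p x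
  map_add_le : ∀ x y, p (x + y) ≤ p x + p y

namespace IsSublinear

section Module

variable {E : Type*} [AddCommGroup E] [Module ℝ E] {p : E → ℝ}

lemma map_zero (hp : IsSublinear p) : p 0 = 0 := by
  simpa using hp.map_smul_of_nonneg 0 le_rfl 0

lemma convexOn (hp : IsSublinear p) : ConvexOn ℝ univ p :=
  ⟨convex_univ, fun x _ y _ a b ha hb _ => by
    simpa only [hp.map_smul_of_nonneg a ha, hp.map_smul_of_nonneg b hb, smul_eq_mul]
      using hp.map_add_le (a • x) (b • y)⟩

lemma mul_le_map_smul (hp : IsSublinear p) (c : ℝ) (x : E) : c * p x ≤ p (c • x) := by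
  rcases le_or_gt 0 c with hc | hc
  · rw [hp.map_smul_of_nonneg c hc]
  · have hneg : 0 ≤ p x + p (-x) := by simpa [hp.map_zero] using hp.map_add_le x (-x)
    rw [← neg_neg c, neg_smul, ← smul_neg, hp.map_smul_of_nonneg (-c) (by linarith)]
    nlinarith

lemma exists_linearMap_le_eq (hp : IsSublinear p) {u : E} (hu : u ≠ 0) :
    ∃ g : E →ₗ[ℝ] ℝ, (∀ x, g x ≤ p x) ∧ g u = p u := by
  obtain ⟨g, hg_ext, hg_le⟩ := exists_extension_of_le_sublinear
    (LinearPMap.mkSpanSingleton u (p u) hu) p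
    (fun c hc x => hp.map_smul_of_nonneg c hc.le x) hp.map_add_le (by
      rintro ⟨_, hz⟩
      obtain ⟨c, rfl⟩ := Submodule.mem_span_singleton.1 hz
      rw [LinearPMap.mkSpanSingleton'_apply _ _ _ c hz, smul_eq_mul]
      exact hp.mul_le_map_smul c u)
  refine ⟨g, hg_le, ?_⟩
  rw [hg_ext ⟨u, Submodule.mem_span_singleton_self u⟩]
  exact LinearPMap.mkSpanSingleton_apply ℝ ℝ hu (p u)

end Module

lemma continuous {E : Type*} [NormedAddCommGroup E] [NormedSpace ℝ E] [FiniteDimensional ℝ E]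
    {p : E → ℝ} (hp : IsSublinear p) : Continuous p :=
  hp.convexOn.locallyLipschitz.continuous

lemma exists_inner_le_eq {E : Type*} [NormedAddCommGroup E] [InnerProductSpace ℝ E]
    [FiniteDimensional ℝ E] {p : E → ℝ} (hp : IsSublinear p) {u : E} (hu : u ≠ 0) :
    ∃ l : E, (∀ x, ⟪l, x⟫ ≤ p x) ∧ ⟪l, u⟫ = p u := by
  obtain ⟨g, hg_le, hg_eq⟩ := hp.exists_linearMap_le_eq hu
  refine ⟨(InnerProductSpace.toDual ℝ E).symm (LinearMap.toContinuousLinearMap g), ?_, ?_⟩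
  · simpa [InnerProductSpace.toDual_symm_apply] using hg_le
  · simpa [InnerProductSpace.toDual_symm_apply] using hg_eq

end IsSublinear

lemma CompactSpace.exists_measurableSet_partition_subordinate {X : Type*} [TopologicalSpace X]
    [CompactSpace X] [MeasurableSpace X] (W : X → Set X) (hW : ∀ x, MeasurableSet (W x))
    (hW_nhds : ∀ x, W x ∈ 𝓝 x) :
    ∃ (m : ℕ) (U : Fin m → Set X) (c : Fin m → X), (∀ k, MeasurableSet (U k)) ∧
      Pairwise (Disjoint on U) ∧ (⋃ k, U k) = univ ∧ ∀ k, U k ⊆ W (c k) := by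
  obtain ⟨t, -, ht⟩ := isCompact_univ.elim_nhds_subcover W fun x _ => hW_nhds x
  let c : Fin t.card → X := fun k => t.equivFin.symm k
  refine ⟨t.card, disjointed (W ∘ c), c, fun k => disjointedRec (fun _ _ hs => hs.diff (hW _))
    (hW _), disjoint_disjointed _, ?_, disjointed_subset _⟩
  refine eq_univ_of_univ_subset (ht.trans ?_)
  rw [iUnion_disjointed]
  exact iUnion₂_subset fun x hx => subset_iUnion_of_subset (t.equivFin ⟨x, hx⟩) (by simp [c])

lemma IsSublinear.exists_partition_sphere_le_inner_add {E : Type*} [NormedAddCommGroup E]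
    [InnerProductSpace ℝ E] [FiniteDimensional ℝ E] [MeasurableSpace E] [OpensMeasurableSpace E]
    {p : E → ℝ} (hp : IsSublinear p) {ε : ℝ} (hε : 0 < ε) :
    ∃ (m : ℕ) (U : Fin m → Set (Metric.sphere (0 : E) 1)) (l : Fin m → E),
      (∀ k, MeasurableSet (U k)) ∧ Pairwise (Disjoint on U) ∧ (⋃ k, U k) = univ ∧
      (∀ k x, ⟪l k, x⟫ ≤ p x) ∧ ∀ k, ∀ u ∈ U k, p u ≤ ⟪l k, (u : E)⟫ + ε := by
  choose l hl_le hl_eq using fun c : Metric.sphere (0 : E) 1 =>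
    hp.exists_inner_le_eq (ne_zero_of_mem_unit_sphere c)
  have hW_open : ∀ c, IsOpen {u : Metric.sphere (0 : E) 1 | p u < ⟪l c, (u : E)⟫ + ε} :=
    fun c => isOpen_lt (hp.continuous.comp continuous_subtype_val) (by fun_prop)
  obtain ⟨m, U, c, hU_meas, hU_disj, hU_univ, hU_sub⟩ :=
    CompactSpace.exists_measurableSet_partition_subordinate _ (fun c => (hW_open c).measurableSet)
      fun c => (hW_open c).mem_nhds (by simp [hl_eq c, hε])
  exact ⟨m, U, l ∘ c, hU_meas, hU_disj, hU_univ, fun k => hl_le (c k),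
    fun k u hu => (hU_sub k hu).le⟩

lemma LinMajorizes.integral_le_add {N : ℕ}
    {μ ν : Measure (Metric.sphere (0 : EuclideanSpace ℝ (Fin N)) 1)} [IsFiniteMeasure ν]
    (hmaj : LinMajorizes μ ν) {f : Metric.sphere (0 : EuclideanSpace ℝ (Fin N)) 1 → ℝ}
    (hf : Continuous f) {m : ℕ} {U : Fin m → Set (Metric.sphere (0 : EuclideanSpace ℝ (Fin N)) 1)}
    (hU_meas : ∀ k, MeasurableSet (U k)) (hU_disj : Pairwise (Disjoint on U))
    (hU_univ : (⋃ k, U k) = univ) {l : Fin m → EuclideanSpace ℝ (Fin N)} {ε : ℝ}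
    (hl_le_f : ∀ k (u : Metric.sphere (0 : EuclideanSpace ℝ (Fin N)) 1),
      ⟪l k, (u : EuclideanSpace ℝ (Fin N))⟫ ≤ f u)
    (hf_le_l : ∀ k, ∀ u ∈ U k, f u ≤ ⟪l k, (u : EuclideanSpace ℝ (Fin N))⟫ + ε) :
    ∫ u, f u ∂ν ≤ ∫ u, f u ∂μ + ε * ν.real univ := by
  obtain ⟨μs, hμs_fin, rfl, hμs_inner⟩ := hmaj m U hU_meas hU_disj hU_univ
  have hint : ∀ (κ : Measure (Metric.sphere (0 : EuclideanSpace ℝ (Fin N)) 1)) [IsFiniteMeasure κ]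
      {g : Metric.sphere (0 : EuclideanSpace ℝ (Fin N)) 1 → ℝ}, Continuous g → Integrable g κ :=
    fun _ _ _ hg => hg.integrable_of_hasCompactSupport (.of_compactSpace _)
  have hinner : ∀ k, Continuous fun u : Metric.sphere (0 : EuclideanSpace ℝ (Fin N)) 1 =>
      ⟪l k, (u : EuclideanSpace ℝ (Fin N))⟫ := fun k => by fun_prop
  have hpiece : ∀ k, ∫ u in U k, f u ∂ν ≤ ∫ u, f u ∂(μs k) + ε * ν.real (U k) := fun k => by
    have := hμs_fin k
    calc ∫ u in U k, f u ∂ν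
        ≤ ∫ u in U k, (⟪l k, (u : EuclideanSpace ℝ (Fin N))⟫ + ε) ∂ν :=
          setIntegral_mono_on (hint ν hf).integrableOn
            ((hint ν (hinner k)).add (integrable_const ε)).integrableOn (hU_meas k) (hf_le_l k)
      _ = ∫ u, ⟪l k, (u : EuclideanSpace ℝ (Fin N))⟫ ∂(μs k) + ε * ν.real (U k) := by
          rw [integral_add (hint ν (hinner k)).integrableOn (integrable_const ε).integrableOn,
            setIntegral_const, hμs_inner, smul_eq_mul, mul_comm]
      _ ≤ ∫ u, f u ∂(μs k) + ε * ν.real (U k) :=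
          add_le_add_left (integral_mono (hint (μs k) (hinner k)) (hint (μs k) hf) (hl_le_f k)) _
  calc ∫ u, f u ∂ν = ∑ k, ∫ u in U k, f u ∂ν := by
        rw [← integral_iUnion_fintype hU_meas hU_disj fun k => (hint ν hf).integrableOn, hU_univ,
          setIntegral_univ]
    _ ≤ ∑ k, (∫ u, f u ∂(μs k) + ε * ν.real (U k)) := Finset.sum_le_sum fun k _ => hpiece k
    _ = ∫ u, f u ∂(∑ k, μs k) + ε * ν.real univ := by
        rw [Finset.sum_add_distrib, ← Finset.mul_sum, ← measureReal_iUnion_fintype hU_disj hU_meas,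
          hU_univ, integral_finsetSum_measure fun k _ => (have := hμs_fin k; hint (μs k) hf)]

theorem integral_sublinear_le_of_linMajorizes_general {N : ℕ}
    (μ ν : Measure (Metric.sphere (0 : EuclideanSpace ℝ (Fin N)) 1))
    [IsFiniteMeasure ν]
    (hmaj : LinMajorizes μ ν)
    (p : EuclideanSpace ℝ (Fin N) → ℝ)
    (hhom : ∀ t : ℝ, 0 ≤ t → ∀ x, p (t • x) = t * p x)
    (hsub : ∀ x y, p (x + y) ≤ p x + p y) :
    ∫ u, p (u : EuclideanSpace ℝ (Fin N)) ∂ν ≤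
      ∫ u, p (u : EuclideanSpace ℝ (Fin N)) ∂μ := by
  have hp : IsSublinear p := ⟨hhom, hsub⟩
  refine le_of_forall_pos_le_add fun δ hδ => ?_
  have hε : 0 < δ / (ν.real univ + 1) := by positivity
  obtain ⟨m, U, l, hU_meas, hU_disj, hU_univ, hl_le_p, hp_le_l⟩ :=
    hp.exists_partition_sphere_le_inner_add hε
  calc ∫ u, p (u : EuclideanSpace ℝ (Fin N)) ∂ν
        ≤ ∫ u, p (u : EuclideanSpace ℝ (Fin N)) ∂μ + δ / (ν.real univ + 1) * ν.real univ :=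
        hmaj.integral_le_add (hp.continuous.comp continuous_subtype_val) hU_meas hU_disj hU_univ
          (fun k u => hl_le_p k u) hp_le_l
    _ ≤ ∫ u, p (u : EuclideanSpace ℝ (Fin N)) ∂μ + δ := by
        gcongr
        rw [div_mul_eq_mul_div, div_le_iff₀ (by positivity)]
        nlinarith [measureReal_nonneg (μ := ν) (s := univ)]

/-- If `μ` linearly majorizes `ν` then `∫ p dμ ≥ ∫ p dν` for every sublinear
functional `p : ℝ^N → ℝ`. -/
theorem integral_sublinear_le_of_linMajorizes {N : ℕ} (hN : 1 ≤ N)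
    (μ ν : Measure (Metric.sphere (0 : EuclideanSpace ℝ (Fin N)) 1))
    [IsFiniteMeasure μ] [IsFiniteMeasure ν]
    (hmaj : LinMajorizes μ ν)
    (p : EuclideanSpace ℝ (Fin N) → ℝ)
    (hhom : ∀ t : ℝ, 0 ≤ t → ∀ x, p (t • x) = t * p x)
    (hsub : ∀ x y, p (x + y) ≤ p x + p y) :
    ∫ u, p (u : EuclideanSpace ℝ (Fin N)) ∂ν ≤
      ∫ u, p (u : EuclideanSpace ℝ (Fin N)) ∂μ :=
  integral_sublinear_le_of_linMajorizes_general μ ν hmaj p hhom hsub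
end

section
/- Let M be a set of gauges in ℝ^N that is closed in the Hausdorff metric and satisfies: conv(K ∪ L) ∈ M and K ∩ L ∈ M for all K, L ∈ M, and α·K ∈ M for every K ∈ M and every real α ≥ 0. Then M is a cone; in particular, K + L ∈ M (Minkowski sum) for all K, L ∈ M. -/
open Pointwise

/-- The support function `h_K(x) = sup{⟨x, y⟩ : y ∈ K}` of `K ⊆ ℝ^N`. -/
noncomputable def suppFn {N : ℕ} (K : Set (EuclideanSpace ℝ (Fin N)))
    (x : EuclideanSpace ℝ (Fin N)) : ℝ :=
  sSup ((fun y => (inner ℝ x y : ℝ)) '' K)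

/-- A gauge in `ℝ^N`: a compact convex set containing the origin. -/
def IsGauge {N : ℕ} (K : Set (EuclideanSpace ℝ (Fin N))) : Prop :=
  IsCompact K ∧ Convex ℝ K ∧ (0 : EuclideanSpace ℝ (Fin N)) ∈ K

/-- A family of gauges is nondegenerate if `sup_ξ ‖A‖_{S_ξ} < +∞` for every
linear operator `A` on `ℝ^N`, i.e. there is `C` such that for each `ξ` and each
`x ∈ S ξ` the gauge value `‖A x‖_{S ξ} = inf{β > 0 : A x ∈ β • S ξ}` is
attained below `C`. -/
def Nondegenerate {N : ℕ} {Ξ : Type*}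
    (S : Ξ → Set (EuclideanSpace ℝ (Fin N))) : Prop :=
  ∀ A : EuclideanSpace ℝ (Fin N) →ₗ[ℝ] EuclideanSpace ℝ (Fin N),
    ∃ C : ℝ, ∀ ξ, ∀ x ∈ S ξ, ∃ β : ℝ, 0 < β ∧ β ≤ C ∧ A x ∈ β • S ξ

/-- Closedness of a collection of (nonempty compact) subsets of `ℝ^N` in the
topology of the Hausdorff metric. -/
def IsHausdorffClosed {N : ℕ} (C : Set (Set (EuclideanSpace ℝ (Fin N)))) : Prop :=
  IsClosed {K : TopologicalSpace.NonemptyCompacts (EuclideanSpace ℝ (Fin N)) |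
    (K : Set (EuclideanSpace ℝ (Fin N))) ∈ C}

/-- `π↑(F)`: the least Hausdorff-closed cone of gauges containing `F` that is
closed under the join `K ∨ L = conv (K ∪ L)`. -/
def piUp {N : ℕ} (F : Set (Set (EuclideanSpace ℝ (Fin N)))) :
    Set (Set (EuclideanSpace ℝ (Fin N))) :=
  ⋂₀ {C | (∀ K ∈ C, IsGauge K) ∧ IsHausdorffClosed C ∧ F ⊆ C ∧
      (∀ K ∈ C, ∀ L ∈ C, K + L ∈ C) ∧
      (∀ K ∈ C, ∀ α : ℝ, 0 ≤ α → α • K ∈ C) ∧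
      (∀ K ∈ C, ∀ L ∈ C, convexHull ℝ (K ∪ L) ∈ C)}

/-- `π↓(F)`: the least Hausdorff-closed cone of gauges containing `F` that is
closed under the meet `K ∧ L = K ∩ L`. -/
def piDown {N : ℕ} (F : Set (Set (EuclideanSpace ℝ (Fin N)))) :
    Set (Set (EuclideanSpace ℝ (Fin N))) :=
  ⋂₀ {C | (∀ K ∈ C, IsGauge K) ∧ IsHausdorffClosed C ∧ F ⊆ C ∧
      (∀ K ∈ C, ∀ L ∈ C, K + L ∈ C) ∧
      (∀ K ∈ C, ∀ α : ℝ, 0 ≤ α → α • K ∈ C) ∧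
      (∀ K ∈ C, ∀ L ∈ C, K ∩ L ∈ C)}

/-- `π(F)`: the least Hausdorff-closed cone of gauges containing `F` that is
closed under both the join and the meet. -/
def piBoth {N : ℕ} (F : Set (Set (EuclideanSpace ℝ (Fin N)))) :
    Set (Set (EuclideanSpace ℝ (Fin N))) :=
  ⋂₀ {C | (∀ K ∈ C, IsGauge K) ∧ IsHausdorffClosed C ∧ F ⊆ C ∧
      (∀ K ∈ C, ∀ L ∈ C, K + L ∈ C) ∧
      (∀ K ∈ C, ∀ α : ℝ, 0 ≤ α → α • K ∈ C) ∧
      (∀ K ∈ C, ∀ L ∈ C, convexHull ℝ (K ∪ L) ∈ C) ∧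
      (∀ K ∈ C, ∀ L ∈ C, K ∩ L ∈ C)}

open Set Filter Metric TopologicalSpace Topology

/-!
For `0 < t < 1` the join `conv (t⁻¹ • K ∪ (1 - t)⁻¹ • L)` contains `K + L`, and separating a point
outside `K + L` by a hyperplane shows that `K + L` is the intersection of all these joins. The
finite intersections of the joins lie in `M`, decrease, and by compactness converge to their
intersection in the Hausdorff metric, so `K + L ∈ M` because `M` is closed.
-/

section HausdorffLimit

variable {X : Type*} [MetricSpace X]

theorem NonemptyCompacts.tendsto_atTop_of_antitone {ι : Type*} [SemilatticeSup ι] [Nonempty ι]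
    {T : ι → NonemptyCompacts X} (hT : Antitone fun i => (T i : Set X)) {A : NonemptyCompacts X}
    (hA : (A : Set X) = ⋂ i, (T i : Set X)) :
    Tendsto T atTop (𝓝 A) := by
  rw [Metric.tendsto_atTop]
  intro ε hε
  have hnear : ∃ i, ∀ x ∈ (T i : Set X), infDist x A < ε / 2 := by
    by_contra! hfar
    let S : ι → Set X := fun i => (T i : Set X) ∩ {x | ε / 2 ≤ infDist x A}
    have hSclosed : IsClosed {x | ε / 2 ≤ infDist x (A : Set X)} :=
      isClosed_le continuous_const (continuous_infDist_pt _)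
    obtain ⟨x, hx⟩ := IsCompact.nonempty_iInter_of_directed_nonempty_isCompact_isClosed S
      (Antitone.directed_ge fun i j hij => inter_subset_inter_left _ (hT hij)) hfar
      (fun i => (T i).isCompact.inter_right hSclosed)
      (fun i => (T i).isCompact.isClosed.inter hSclosed)
    have hxA : x ∈ (A : Set X) := hA ▸ mem_iInter.2 fun i => (mem_iInter.1 hx i).1
    have hx₀ := (mem_iInter.1 hx (Classical.arbitrary ι)).2
    rw [mem_ofPred_eq, infDist_zero_of_mem hxA] at hx₀
    linarith
  obtain ⟨i, hi⟩ := hnear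
  refine ⟨i, fun j hij => ?_⟩
  have hAT : (A : Set X) ⊆ T j := hA ▸ iInter_subset _ j
  have hle : hausdorffDist (T j : Set X) A ≤ ε / 2 :=
    hausdorffDist_le_of_infDist (by positivity) (fun x hx => (hi x (hT hij hx)).le)
      fun x hx => by rw [infDist_zero_of_mem (hAT hx)]; positivity
  rw [NonemptyCompacts.dist_eq]
  linarith

theorem iInter_mem_of_isClosed_setOf_nonemptyCompacts {M : Set (Set X)}
    (hclosed : IsClosed {K : NonemptyCompacts X | (K : Set X) ∈ M})
    (hmeet : ∀ K ∈ M, ∀ L ∈ M, K ∩ L ∈ M) {ι : Type*} [Nonempty ι] {C : ι → Set X}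
    (hCM : ∀ i, C i ∈ M) (hC : ∀ i, IsCompact (C i)) (hne : (⋂ i, C i).Nonempty) :
    ⋂ i, C i ∈ M := by
  classical
  obtain ⟨i₀⟩ := ‹Nonempty ι›
  let T : Finset ι → Set X := fun s => (insert i₀ s).inf' (Finset.insert_nonempty i₀ s) C
  have hTM : ∀ s, T s ∈ M := fun s =>
    Finset.inf'_mem M hmeet _ _ _ fun i _ => hCM i
  have hTcompact : ∀ s, IsCompact (T s) := fun s =>
    Finset.inf'_mem {K | IsCompact K} (fun _ hK _ hL => IsCompact.inter hK hL) _ _ _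
      fun i _ => hC i
  have hsubT : ∀ s, ⋂ i, C i ⊆ T s := fun s =>
    Finset.le_inf' _ _ fun i _ => iInter_subset C i
  have hTsub : ∀ i, T {i} ⊆ C i := fun i => Finset.inf'_le _ (by simp)
  let Tc : Finset ι → NonemptyCompacts X := fun s => ⟨⟨T s, hTcompact s⟩, hne.mono (hsubT s)⟩
  let A : NonemptyCompacts X := ⟨⟨⋂ i, C i, (hC i₀).of_isClosed_subset
    (isClosed_iInter fun i => (hC i).isClosed) (iInter_subset C i₀)⟩, hne⟩
  have hlim : Tendsto Tc atTop (𝓝 A) :=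
    NonemptyCompacts.tendsto_atTop_of_antitone
      (fun s _ hst =>
        Finset.inf'_mono C (Finset.insert_subset_insert i₀ hst) (Finset.insert_nonempty i₀ s))
      (show ⋂ i, C i = ⋂ s, T s from Subset.antisymm (subset_iInter hsubT)
        (subset_iInter fun i => (iInter_subset _ {i}).trans (hTsub i)))
  exact hclosed.mem_of_tendsto hlim (Eventually.of_forall hTM)

end HausdorffLimit

section MinkowskiSum

variable {E : Type*} [AddCommGroup E] [Module ℝ E]

theorem add_subset_convexHull_union_smul (K L : Set E) {t : ℝ} (ht₀ : 0 < t) (ht₁ : t < 1) :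
    K + L ⊆ convexHull ℝ (t⁻¹ • K ∪ (1 - t)⁻¹ • L) := by
  rintro _ ⟨a, ha, b, hb, rfl⟩
  have hmem := convex_convexHull ℝ (t⁻¹ • K ∪ (1 - t)⁻¹ • L)
    (subset_convexHull ℝ _ (Or.inl (smul_mem_smul_set ha)))
    (subset_convexHull ℝ _ (Or.inr (smul_mem_smul_set hb)))
    ht₀.le (sub_nonneg.2 ht₁.le) (add_sub_cancel t 1)
  rwa [smul_inv_smul₀ ht₀.ne', smul_inv_smul₀ (sub_pos.2 ht₁).ne'] at hmem

theorem convexHull_union_smul_subset_setOf_lt (f : E →ₗ[ℝ] ℝ) {K L : Set E} {t u : ℝ}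
    (ht₀ : 0 < t) (ht₁ : t < 1) (hK : ∀ a ∈ K, f a < t * u) (hL : ∀ b ∈ L, f b < (1 - t) * u) :
    convexHull ℝ (t⁻¹ • K ∪ (1 - t)⁻¹ • L) ⊆ {x | f x < u} := by
  have hdilate : ∀ {c : ℝ} {S : Set E}, 0 < c → (∀ a ∈ S, f a < c * u) →
      c⁻¹ • S ⊆ {x | f x < u} := by
    rintro c S hc hS _ ⟨a, ha, rfl⟩
    rw [mem_ofPred_eq, map_smul, smul_eq_mul, inv_mul_lt_iff₀ hc]
    exact hS a ha
  exact convexHull_min (union_subset (hdilate ht₀ hK) (hdilate (sub_pos.2 ht₁) hL))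
    (convex_halfSpace_lt f.isLinear u)

variable [TopologicalSpace E] [IsTopologicalAddGroup E] [ContinuousSMul ℝ E]
  [LocallyConvexSpace ℝ E] [T2Space E]

theorem mem_add_of_forall_mem_convexHull_union_smul {K L : Set E}
    (hKc : IsCompact K) (hKv : Convex ℝ K) (hK0 : 0 ∈ K)
    (hLc : IsCompact L) (hLv : Convex ℝ L) (hL0 : 0 ∈ L) {y : E}
    (hy : ∀ t ∈ Ioo (0 : ℝ) 1, y ∈ convexHull ℝ (t⁻¹ • K ∪ (1 - t)⁻¹ • L)) : y ∈ K + L := by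
  by_contra hyKL
  obtain ⟨f, u, hf, hfy⟩ :=
    geometric_hahn_banach_closed_point (hKv.add hLv) (hKc.add hLc).isClosed hyKL
  obtain ⟨a₀, ha₀, hmax_a⟩ := hKc.exists_isMaxOn ⟨0, hK0⟩ f.continuous.continuousOn
  obtain ⟨b₀, hb₀, hmax_b⟩ := hLc.exists_isMaxOn ⟨0, hL0⟩ f.continuous.continuousOn
  have hfa₀ : 0 ≤ f a₀ := by simpa using hmax_a hK0
  have hfb₀ : 0 ≤ f b₀ := by simpa using hmax_b hL0
  have hsum : f a₀ + f b₀ < u := by simpa using hf _ (add_mem_add ha₀ hb₀)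
  have hu : 0 < u := by linarith
  obtain ⟨t, hat, htb⟩ : ∃ t, f a₀ / u < t ∧ t < 1 - f b₀ / u := exists_between (by
    rw [lt_sub_iff_add_lt, ← add_div, div_lt_one hu]
    exact hsum)
  have ht₀ : 0 < t := (div_nonneg hfa₀ hu.le).trans_lt hat
  have ht₁ : t < 1 := htb.trans_le (sub_le_self 1 (div_nonneg hfb₀ hu.le))
  have hK : ∀ a ∈ K, f a < t * u := fun a ha =>
    (hmax_a ha).trans_lt ((div_lt_iff₀ hu).1 hat)
  have hL : ∀ b ∈ L, f b < (1 - t) * u := fun b hb =>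
    (hmax_b hb).trans_lt ((div_lt_iff₀ hu).1 (lt_sub_comm.1 htb))
  have hyu : f y < u :=
    convexHull_union_smul_subset_setOf_lt f.toLinearMap ht₀ ht₁ hK hL (hy t ⟨ht₀, ht₁⟩)
  linarith

theorem add_eq_iInter_convexHull_union_smul {K L : Set E}
    (hKc : IsCompact K) (hKv : Convex ℝ K) (hK0 : 0 ∈ K)
    (hLc : IsCompact L) (hLv : Convex ℝ L) (hL0 : 0 ∈ L) :
    K + L = ⋂ t : Ioo (0 : ℝ) 1, convexHull ℝ ((t : ℝ)⁻¹ • K ∪ (1 - (t : ℝ))⁻¹ • L) :=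
  Subset.antisymm (subset_iInter fun t => add_subset_convexHull_union_smul K L t.2.1 t.2.2)
    fun _ hy => mem_add_of_forall_mem_convexHull_union_smul hKc hKv hK0 hLc hLv hL0
      fun t ht => mem_iInter.1 hy ⟨t, ht⟩

end MinkowskiSum

/-- **4.3.**  A Hausdorff-closed set of gauges containing the join
`conv (K ∪ L)` and the meet `K ∩ L` of any two of its members and all
nonnegative dilations of its members is a cone: it is closed under Minkowski
addition. -/
theorem closed_lattice_of_gauges_is_cone {N : ℕ}
    (M : Set (Set (EuclideanSpace ℝ (Fin N))))
    (hg : ∀ K ∈ M, IsGauge K)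
    (hclosed : IsHausdorffClosed M)
    (hjoin : ∀ K ∈ M, ∀ L ∈ M, convexHull ℝ (K ∪ L) ∈ M)
    (hmeet : ∀ K ∈ M, ∀ L ∈ M, K ∩ L ∈ M)
    (hsmul : ∀ K ∈ M, ∀ α : ℝ, 0 ≤ α → α • K ∈ M) :
    ∀ K ∈ M, ∀ L ∈ M, K + L ∈ M := by
  intro K hK L hL
  obtain ⟨hKc, hKv, hK0⟩ := hg K hK
  obtain ⟨hLc, hLv, hL0⟩ := hg L hL
  have hjoinM : ∀ t : Ioo (0 : ℝ) 1, convexHull ℝ ((t : ℝ)⁻¹ • K ∪ (1 - (t : ℝ))⁻¹ • L) ∈ M :=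
    fun t => hjoin _ (hsmul K hK _ (inv_nonneg.2 t.2.1.le)) _
      (hsmul L hL _ (inv_nonneg.2 (sub_nonneg.2 t.2.2.le)))
  have hKL := add_eq_iInter_convexHull_union_smul hKc hKv hK0 hLc hLv hL0
  have := nonempty_Ioo_subtype (zero_lt_one' ℝ)
  rw [hKL]
  exact iInter_mem_of_isClosed_setOf_nonemptyCompacts hclosed hmeet hjoinM
    (fun t => (hg _ (hjoinM t)).1) (hKL ▸ ⟨0, by simpa using add_mem_add hK0 hL0⟩)
end
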